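/- arXiv:2010.16130 — 2 statements merged into one kernel-verified Lean document; each statement's English description precedes it below -/
import Mathlib

section
/- If a vector v ∈ ℝ^N satisfies 𝒪_N(C,A)·v = 0 (equivalently, C·A^j·v = 0 for all j = 0,…,N−1), then C·exp(tA)·v = 0 for every t ∈ ℝ. -/
/-!
By Cayley–Hamilton every power of `A` is a linear combination of `A ^ j` with `j < N`, so all
powers of `A` lie in the subspace `{M | C M v = 0}`. This subspace is closed, and `exp (t A)` is a
limit of linear combinations of powers of `A`, so it lies there as well.
-/

open Matrix

/-- The observability matrix `𝒪_N(C,A)`. -/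
def obsMat {N P : ℕ} (A : Matrix (Fin N) (Fin N) ℝ) (C : Matrix (Fin P) (Fin N) ℝ) :
    Matrix (Fin N × Fin P) (Fin N) ℝ :=
  Matrix.of fun jp i => (C * A ^ (jp.1 : ℕ)) jp.2 i

open Polynomial in
theorem Matrix.pow_mem_span_pow_lt_card {n R : Type*} [Fintype n] [DecidableEq n] [CommRing R]
    [Nontrivial R] (M : Matrix n n R) (k : ℕ) :
    M ^ k ∈ Submodule.span R (Set.range fun i : Fin (Fintype.card n) => M ^ (i : ℕ)) :=
  PowerBasis.mem_span_pow'.mpr ⟨X ^ k %ₘ M.charpoly,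
    M.charpoly_degree_eq_dim ▸ degree_modByMonic_lt _ M.charpoly_monic,
    M.pow_eq_aeval_mod_charpoly k⟩

theorem NormedSpace.exp_mem_of_forall_pow_mem {𝕂 𝔸 : Type*} [Field 𝕂] [CharZero 𝕂] [Ring 𝔸]
    [Algebra 𝕂 𝔸] [TopologicalSpace 𝔸] [IsTopologicalRing 𝔸] {S : Submodule 𝕂 𝔸}
    (hS : IsClosed (S : Set 𝔸)) {x : 𝔸} (hx : ∀ k, x ^ k ∈ S) : exp x ∈ S := by
  rw [exp_eq_tsum 𝕂]
  exact tsum_mem hS fun k => S.smul_mem _ (hx k)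

theorem obsMat_mulVec_eq_zero_iff {N P : ℕ} (A : Matrix (Fin N) (Fin N) ℝ)
    (C : Matrix (Fin P) (Fin N) ℝ) (v : Fin N → ℝ) :
    obsMat A C *ᵥ v = 0 ↔ ∀ j < N, (C * A ^ j) *ᵥ v = 0 := by
  simp only [funext_iff, Prod.forall, Fin.forall_iff]
  rfl

theorem obs_kernel_invisible_general {N P : ℕ}
    (A : Matrix (Fin N) (Fin N) ℝ) (C : Matrix (Fin P) (Fin N) ℝ)
    (v : Fin N → ℝ) (hv : (obsMat A C).mulVec v = 0) :
    ∀ t : ℝ, (C * NormedSpace.exp (t • A)).mulVec v = 0 := by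
  intro t
  let S := LinearMap.ker ((mulVecBilin ℝ ℝ).flip v ∘ₗ mulLeftLinearMap (Fin N) ℝ C)
  have hS : IsClosed (S : Set (Matrix (Fin N) (Fin N) ℝ)) :=
    isClosed_eq (by fun_prop) continuous_const
  have hpow : ∀ k, A ^ k ∈ S := by
    refine fun k => Submodule.span_le.mpr ?_ (A.pow_mem_span_pow_lt_card k)
    rintro _ ⟨j, rfl⟩
    exact (obsMat_mulVec_eq_zero_iff A C v).mp hv j (by simpa using j.2)
  exact NormedSpace.exp_mem_of_forall_pow_mem hS fun k => smul_pow t A k ▸ S.smul_mem _ (hpow k)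

/-- if `𝒪_N(C,A) v = 0` (equivalently `C A^j v = 0` for `j = 0,…,N−1`),
then `C e^{tA} v = 0` for every `t ∈ ℝ`. -/
theorem obs_kernel_invisible {N P : ℕ} (hN : 0 < N) (hP : 0 < P)
    (A : Matrix (Fin N) (Fin N) ℝ) (C : Matrix (Fin P) (Fin N) ℝ)
    (v : Fin N → ℝ) (hv : (obsMat A C).mulVec v = 0) :
    ∀ t : ℝ, (C * NormedSpace.exp (t • A)).mulVec v = 0 :=
  obs_kernel_invisible_general A C v hv
end

section
/- Let B_1,…,B_K ∈ ℝ^{N×M} and let R < K be such that 𝒪_N(C,A)·B_j = 0 for every j ∈ {R+1,…,K}. Then for every α⋆, α ∈ ℝ^K and all controls ε^1,…,ε^L ∈ L²((0,T);ℝ^M), Σ_{m=1}^L ‖C·φ_T(B(α⋆),ε^m) − C·φ_T(B(α),ε^m)‖₂² = Σ_{m=1}^L ‖Σ_{j=1}^{R} (α⋆_j − α_j)·γ(B_j,ε^m)‖₂²; in particular the least-squares cost depends only on the first R coordinates of α. -/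
open MeasureTheory Matrix

/-- Observation integral `γ(B,ε) = ∫_0^T C e^{(T-s)A} B ε(s) ds`. -/
noncomputable def gam {N M P : ℕ} (T : ℝ) (A : Matrix (Fin N) (Fin N) ℝ)
    (C : Matrix (Fin P) (Fin N) ℝ) (B : Matrix (Fin N) (Fin M) ℝ)
    (ε : ℝ → Fin M → ℝ) : Fin P → ℝ :=
  ∫ s in (0:ℝ)..T, (C * NormedSpace.exp ((T - s) • A) * B).mulVec (ε s)

/-- Final state `φ_T(B,ε) = e^{TA} φ₀ + ∫_0^T e^{(T-s)A} B ε(s) ds`. -/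
noncomputable def phiT {N M : ℕ} (T : ℝ) (A : Matrix (Fin N) (Fin N) ℝ)
    (φ₀ : Fin N → ℝ) (B : Matrix (Fin N) (Fin M) ℝ) (ε : ℝ → Fin M → ℝ) : Fin N → ℝ :=
  (NormedSpace.exp (T • A)).mulVec φ₀ +
    ∫ s in (0:ℝ)..T, (NormedSpace.exp ((T - s) • A) * B).mulVec (ε s)

/-! By Cayley–Hamilton every power of `A` is a linear combination of `A ^ 0, …, A ^ (N - 1)`,
so `𝒪_N(C,A) B = 0` forces `C A^k B = 0` for all `k`; summing the exponential series gives
`C e^{tA} B = 0`, hence `γ(B, ε) = 0`. Since `C φ_T(B, ε) = C e^{TA} φ₀ + γ(B, ε)` and `γ` is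
linear in `B`, the residual `C φ_T(B(α⋆), ε) - C φ_T(B(α), ε)` is
`Σ_j (α⋆_j - α_j) γ(B_j, ε)`, and only the terms with `j < R` survive. -/

open Polynomial in
theorem Matrix.map_pow_eq_zero_of_forall_lt_card {R n E : Type*} [CommRing R] [Nontrivial R]
    [Fintype n] [DecidableEq n] [AddCommGroup E] [Module R E] (A : Matrix n n R)
    (f : Matrix n n R →ₗ[R] E) (h : ∀ i < Fintype.card n, f (A ^ i) = 0) (k : ℕ) :
    f (A ^ k) = 0 := by
  rcases (Fintype.card n).eq_zero_or_pos with hn | hn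
  · have : IsEmpty n := Fintype.card_eq_zero_iff.mp hn
    rw [Subsingleton.elim (A ^ k) 0, map_zero]
  have hdeg : (X ^ k %ₘ A.charpoly).natDegree < Fintype.card n := by
    rw [← A.charpoly_natDegree_eq_dim]
    refine natDegree_modByMonic_lt _ A.charpoly_monic fun h1 => ?_
    have := congrArg natDegree h1
    rw [A.charpoly_natDegree_eq_dim, natDegree_one] at this
    omega
  rw [pow_eq_aeval_mod_charpoly, aeval_eq_sum_range' hdeg, map_sum]
  exact Finset.sum_eq_zero fun i hi => by rw [map_smul, h i (Finset.mem_range.mp hi), smul_zero]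

theorem NormedSpace.map_exp_eq_zero_of_forall_map_pow {𝕂 𝔸 E : Type*} [Field 𝕂] [CharZero 𝕂]
    [Ring 𝔸] [Algebra 𝕂 𝔸] [TopologicalSpace 𝔸] [IsTopologicalRing 𝔸] [AddCommGroup E]
    [Module 𝕂 E] [TopologicalSpace E] [T2Space E] (f : 𝔸 →L[𝕂] E) {x : 𝔸}
    (h : ∀ k, f (x ^ k) = 0) : f (exp x) = 0 := by
  rw [congrFun (exp_eq_tsum 𝕂) x]
  by_cases hs : Summable fun n : ℕ => (n.factorial⁻¹ : 𝕂) • x ^ n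
  · simp [f.map_tsum hs, h]
  · rw [tsum_eq_zero_of_not_summable hs, map_zero]

@[fun_prop]
theorem Continuous.matrix_exp_smul {α m : Type*} [TopologicalSpace α] [Fintype m] [DecidableEq m]
    {f : α → ℝ} (hf : Continuous f) (A : Matrix m m ℝ) :
    Continuous fun x => NormedSpace.exp (f x • A) := by
  let _ : NormedRing (Matrix m m ℝ) := Matrix.linftyOpNormedRing
  let _ : NormedAlgebra ℝ (Matrix m m ℝ) := Matrix.linftyOpNormedAlgebra
  exact (differentiable_exp_smul_const ℝ A).continuous.comp hf

theorem IntervalIntegrable.continuousOn_mulVec {m n : Type*} [Fintype m] [Fintype n]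
    {F : ℝ → Matrix m n ℝ} {v : ℝ → n → ℝ} {a b : ℝ} {μ : Measure ℝ} [IsLocallyFiniteMeasure μ]
    (hv : IntervalIntegrable v μ a b) (hF : ContinuousOn F (Set.uIcc a b)) :
    IntervalIntegrable (fun s => F s *ᵥ v s) μ a b := by
  have hsum : (fun s => F s *ᵥ v s) = ∑ k, fun s => v s k • (F s)ᵀ k := by
    ext s i
    simp [mulVec, dotProduct, mul_comm]
  rw [hsum]
  refine IntervalIntegrable.sum _ fun k _ => IntervalIntegrable.smul_continuousOn ?_ ?_
  · exact ⟨hv.1.eval k, hv.2.eval k⟩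
  · exact continuousOn_pi.mpr fun i => (continuous_apply_apply i k).comp_continuousOn hF

section ObservationIntegral

variable {N M P : ℕ} {T : ℝ} {A : Matrix (Fin N) (Fin N) ℝ} {C : Matrix (Fin P) (Fin N) ℝ}

theorem obsMat_mul_eq_zero_iff {B : Matrix (Fin N) (Fin M) ℝ} :
    obsMat A C * B = 0 ↔ ∀ i < N, C * A ^ i * B = 0 := by
  constructor
  · intro h i hi
    ext p q
    simpa [obsMat, Matrix.mul_apply] using congrFun (congrFun h (⟨i, hi⟩, p)) q
  · intro h
    ext ⟨i, p⟩ q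
    simpa [obsMat, Matrix.mul_apply] using congrFun (congrFun (h i i.isLt) p) q

theorem mul_exp_smul_mul_eq_zero_of_obsMat_mul_eq_zero {B : Matrix (Fin N) (Fin M) ℝ}
    (hB : obsMat A C * B = 0) (t : ℝ) : C * NormedSpace.exp (t • A) * B = 0 := by
  let f := (mulRightLinearMap (Fin P) ℝ B).comp (mulLeftLinearMap (Fin N) ℝ C)
  have hpow : ∀ k, f (A ^ k) = 0 :=
    A.map_pow_eq_zero_of_forall_lt_card f <| by simpa [f] using obsMat_mul_eq_zero_iff.mp hB
  refine NormedSpace.map_exp_eq_zero_of_forall_map_pow (𝕂 := ℝ)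
    (LinearMap.toContinuousLinearMap f) fun k => ?_
  simp [smul_pow, hpow k]

theorem gam_eq_zero_of_obsMat_mul_eq_zero {B : Matrix (Fin N) (Fin M) ℝ}
    (hB : obsMat A C * B = 0) (ε : ℝ → Fin M → ℝ) : gam T A C B ε = 0 := by
  simp [gam, mul_exp_smul_mul_eq_zero_of_obsMat_mul_eq_zero hB]

variable {ε : ℝ → Fin M → ℝ}

theorem gam_sum_smul (hε : IntervalIntegrable ε volume 0 T) {ι : Type*} (s : Finset ι)
    (c : ι → ℝ) (B : ι → Matrix (Fin N) (Fin M) ℝ) :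
    gam T A C (∑ j ∈ s, c j • B j) ε = ∑ j ∈ s, c j • gam T A C (B j) ε := by
  have hint : ∀ j, IntervalIntegrable
      (fun s => (C * NormedSpace.exp ((T - s) • A) * B j) *ᵥ ε s) volume 0 T :=
    fun j => hε.continuousOn_mulVec (Continuous.continuousOn (by fun_prop))
  simp only [gam, Matrix.mul_sum, Matrix.mul_smul, Matrix.sum_mulVec, Matrix.smul_mulVec]
  refine (intervalIntegral.integral_finsetSum fun j _ => (hint j).smul (c j)).trans ?_
  simp only [Pi.smul_apply, intervalIntegral.integral_smul]

theorem mulVec_phiT (hε : IntervalIntegrable ε volume 0 T) (φ₀ : Fin N → ℝ)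
    (B : Matrix (Fin N) (Fin M) ℝ) :
    C *ᵥ phiT T A φ₀ B ε = C *ᵥ (NormedSpace.exp (T • A) *ᵥ φ₀) + gam T A C B ε := by
  have hint : IntervalIntegrable
      (fun s => (NormedSpace.exp ((T - s) • A) * B) *ᵥ ε s) volume 0 T :=
    hε.continuousOn_mulVec (Continuous.continuousOn (by fun_prop))
  rw [phiT, mulVec_add, gam]
  congr 1
  simpa [Matrix.mulVec_mulVec, Matrix.mul_assoc] using
    ((LinearMap.toContinuousLinearMap C.mulVecLin).intervalIntegral_comp_comm hint).symm

end ObservationIntegral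

theorem cost_depends_on_observable_coefficients_general {N M P K L : ℕ}
    (T : ℝ) (hT : 0 < T)
    (A : Matrix (Fin N) (Fin N) ℝ) (C : Matrix (Fin P) (Fin N) ℝ)
    (φ₀ : Fin N → ℝ)
    (Bs : Fin K → Matrix (Fin N) (Fin M) ℝ)
    (R : ℕ)
    (hker : ∀ j : Fin K, R ≤ (j : ℕ) → obsMat A C * Bs j = 0)
    (αstar α : Fin K → ℝ)
    (ε : Fin L → ℝ → Fin M → ℝ)
    (hε : ∀ m, MemLp (ε m) 2 (volume.restrict (Set.Ioc (0:ℝ) T))) :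
    ∑ m : Fin L,
        (C.mulVec (phiT T A φ₀ (∑ j, αstar j • Bs j) (ε m)) -
            C.mulVec (phiT T A φ₀ (∑ j, α j • Bs j) (ε m))) ⬝ᵥ
          (C.mulVec (phiT T A φ₀ (∑ j, αstar j • Bs j) (ε m)) -
            C.mulVec (phiT T A φ₀ (∑ j, α j • Bs j) (ε m))) =
      ∑ m : Fin L,
        (∑ j ∈ Finset.univ.filter (fun j : Fin K => (j : ℕ) < R),
            (αstar j - α j) • gam T A C (Bs j) (ε m)) ⬝ᵥ
          (∑ j ∈ Finset.univ.filter (fun j : Fin K => (j : ℕ) < R),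
            (αstar j - α j) • gam T A C (Bs j) (ε m)) := by
  have hint : ∀ m, IntervalIntegrable (ε m) volume 0 T := fun m =>
    (intervalIntegrable_iff_integrableOn_Ioc_of_le hT.le).mpr ((hε m).integrable one_le_two)
  have hres : ∀ m, C *ᵥ phiT T A φ₀ (∑ j, αstar j • Bs j) (ε m) -
      C *ᵥ phiT T A φ₀ (∑ j, α j • Bs j) (ε m) =
        ∑ j ∈ Finset.univ.filter (fun j : Fin K => (j : ℕ) < R),
          (αstar j - α j) • gam T A C (Bs j) (ε m) := by
    intro m
    rw [mulVec_phiT (hint m), mulVec_phiT (hint m), add_sub_add_left_eq_sub,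
      gam_sum_smul (hint m), gam_sum_smul (hint m), ← Finset.sum_sub_distrib]
    simp_rw [← sub_smul]
    refine (Finset.sum_filter_of_ne fun j _ hj => ?_).symm
    by_contra hjR
    exact hj (by rw [gam_eq_zero_of_obsMat_mul_eq_zero (hker j (not_lt.mp hjR)), smul_zero])
  simp only [hres]

/-- if `𝒪_N(C,A) B_j = 0` for all `j > R` (0-indexed: `j ≥ R`), then the
least-squares cost equals `Σ_m ‖Σ_{j<R} (α⋆_j − α_j) γ(B_j,ε^m)‖₂²`, hence depends only
on the first `R` coordinates of `α`. -/
theorem cost_depends_on_observable_coefficients {N M P K L : ℕ}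
    (hN : 0 < N) (hM : 0 < M) (hP : 0 < P) (hK : 0 < K) (hL : 0 < L)
    (T : ℝ) (hT : 0 < T)
    (A : Matrix (Fin N) (Fin N) ℝ) (C : Matrix (Fin P) (Fin N) ℝ)
    (φ₀ : Fin N → ℝ)
    (Bs : Fin K → Matrix (Fin N) (Fin M) ℝ)
    (R : ℕ) (hR : R < K)
    (hker : ∀ j : Fin K, R ≤ (j : ℕ) → obsMat A C * Bs j = 0)
    (αstar α : Fin K → ℝ)
    (ε : Fin L → ℝ → Fin M → ℝ)
    (hε : ∀ m, MemLp (ε m) 2 (volume.restrict (Set.Ioc (0:ℝ) T))) :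
    ∑ m : Fin L,
        (C.mulVec (phiT T A φ₀ (∑ j, αstar j • Bs j) (ε m)) -
            C.mulVec (phiT T A φ₀ (∑ j, α j • Bs j) (ε m))) ⬝ᵥ
          (C.mulVec (phiT T A φ₀ (∑ j, αstar j • Bs j) (ε m)) -
            C.mulVec (phiT T A φ₀ (∑ j, α j • Bs j) (ε m))) =
      ∑ m : Fin L,
        (∑ j ∈ Finset.univ.filter (fun j : Fin K => (j : ℕ) < R),
            (αstar j - α j) • gam T A C (Bs j) (ε m)) ⬝ᵥ
          (∑ j ∈ Finset.univ.filter (fun j : Fin K => (j : ℕ) < R),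
            (αstar j - α j) • gam T A C (Bs j) (ε m)) :=
  cost_depends_on_observable_coefficients_general T hT A C φ₀ Bs R hker αstar α ε hε
end
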